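/- Let S = {x ∈ ℝ³ : bᵀx = c} with ‖b‖ = 1 and reflection σ(x) = x − 2(bᵀx − c)b. Suppose p_j, p_k ∈ S, p_i, p_m ∈ ℝ³, and μ_ij(p_j − p_i) + μ_ik(p_k − p_i) + μ_im(p_m − p_i) = 0. Then the reflected points p_i' = σ(p_i), p_m' = σ(p_m) satisfy μ_ij(p_j − p_i') + μ_ik(p_k − p_i') + μ_im(p_m' − p_i') = 0. -/

import Mathlib

/-!
Reflection across `S = {x | ⟪b, x⟫ = c}` is affine with linear part `L v = v - 2⟪b, v⟫ b`
and fixes the anchors `p_j, p_k ∈ S`. Hence every difference in the reflected constraint is `L`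
applied to the corresponding original difference, so the reflected constraint is `L` applied to
the original one, which vanishes.
-/

open scoped RealInnerProductSpace

namespace HyperplaneReflection

variable {E : Type*} [NormedAddCommGroup E] [InnerProductSpace ℝ E]

/-- The reflection across `{x | ⟪b, x⟫ = c}` when `‖b‖ = 1`; the identities below hold for any `b`. -/
def reflect (b : E) (c : ℝ) (x : E) : E := x - (2 * (⟪b, x⟫ - c)) • b

def linearPart (b : E) : E →ₗ[ℝ] E where
  toFun v := v - (2 * ⟪b, v⟫) • b
  map_add' v w := by
    simp only [inner_add_right, mul_add, add_smul]
    abel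
  map_smul' a v := by
    simp only [inner_smul_right, smul_sub, smul_smul, RingHom.id_apply]
    ring_nf

theorem linearPart_apply (b v : E) : linearPart b v = v - (2 * ⟪b, v⟫) • b := rfl

theorem reflect_of_inner_eq {b x : E} {c : ℝ} (hx : ⟪b, x⟫ = c) : reflect b c x = x := by
  simp [reflect, hx]

theorem reflect_sub_reflect (b : E) (c : ℝ) (x y : E) :
    reflect b c x - reflect b c y = linearPart b (x - y) := by
  rw [reflect, reflect, linearPart_apply, inner_sub_right]
  module

end HyperplaneReflection

open HyperplaneReflection in
theorem stmt_17_general (b : EuclideanSpace ℝ (Fin 3)) (c : ℝ)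
    (p_i p_j p_k p_m : EuclideanSpace ℝ (Fin 3))
    (hj : ⟪b, p_j⟫ = c) (hk : ⟪b, p_k⟫ = c)
    (μ_ij μ_ik μ_im : ℝ)
    (hcon : μ_ij • (p_j - p_i) + μ_ik • (p_k - p_i) + μ_im • (p_m - p_i) = 0) :
    let p_i' := p_i - (2 * (⟪b, p_i⟫ - c)) • b
    let p_m' := p_m - (2 * (⟪b, p_m⟫ - c)) • b
    μ_ij • (p_j - p_i') + μ_ik • (p_k - p_i') + μ_im • (p_m' - p_i') = 0 := by
  intro p_i' p_m'
  calc μ_ij • (p_j - p_i') + μ_ik • (p_k - p_i') + μ_im • (p_m' - p_i')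
      = μ_ij • (reflect b c p_j - reflect b c p_i) + μ_ik • (reflect b c p_k - reflect b c p_i)
          + μ_im • (reflect b c p_m - reflect b c p_i) := by
        rw [reflect_of_inner_eq hj, reflect_of_inner_eq hk]; rfl
    _ = linearPart b (μ_ij • (p_j - p_i) + μ_ik • (p_k - p_i) + μ_im • (p_m - p_i)) := by
        simp only [map_add, map_smul, reflect_sub_reflect]
    _ = 0 := by rw [hcon, map_zero]

theorem stmt_17 (b : EuclideanSpace ℝ (Fin 3)) (hb : ‖b‖ = 1) (c : ℝ)
    (p_i p_j p_k p_m : EuclideanSpace ℝ (Fin 3))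
    (hj : ⟪b, p_j⟫ = c) (hk : ⟪b, p_k⟫ = c)
    (μ_ij μ_ik μ_im : ℝ)
    (hcon : μ_ij • (p_j - p_i) + μ_ik • (p_k - p_i) + μ_im • (p_m - p_i) = 0) :
    let p_i' := p_i - (2 * (⟪b, p_i⟫ - c)) • b
    let p_m' := p_m - (2 * (⟪b, p_m⟫ - c)) • b
    μ_ij • (p_j - p_i') + μ_ik • (p_k - p_i') + μ_im • (p_m' - p_i') = 0 :=
  stmt_17_general b c p_i p_j p_k p_m hj hk μ_ij μ_ik μ_im hcon
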